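/- Multichannel entropy bound: for any uniquely decodable finite family (c_j)_{j<m} of Q-ary words and any positive real probabilities p_0,…,p_{m−1} summing to 1, we have Σ_{j<m} p_j·|c_j| ≥ −Σ_{j<m} p_j·ln p_j, with equality if and only if |c_j| = −ln p_j for all j ∈ {0,…,m−1}. -/

import Mathlib

open scoped Classical

/-- A `Q`-ary word: for each channel `i`, a finite string over the alphabet `Fin (Q i)`. -/
abbrev Word {n : ℕ} (Q : Fin n → ℕ) : Type := (i : Fin n) → List (Fin (Q i))

/-- Two `Q`-ary words are prefix-free if on some channel neither component is a
prefix of the other. -/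
def PrefixFree {n : ℕ} {Q : Fin n → ℕ} (c c' : Word Q) : Prop :=
  ∃ i : Fin n, ¬ (c i <+: c' i) ∧ ¬ (c' i <+: c i)

/-- The set obtained from `C` by keeping the words whose `i`-th component begins with
the symbol `a` and deleting that first symbol. -/
noncomputable def child {n : ℕ} {Q : Fin n → ℕ} (C : Finset (Word Q)) (i : Fin n)
    (a : Fin (Q i)) : Finset (Word Q) :=
  (C.filter (fun c => (c i).head? = some a)).image
    (fun c => Function.update c i (c i).tail)

/-- Tree-decodability of a finite set of `Q`-ary words. -/
inductive TreeDecodable {n : ℕ} (Q : Fin n → ℕ) : Finset (Word Q) → Prop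
  | empty : TreeDecodable Q ∅
  | single : TreeDecodable Q {(fun _ => [] : Word Q)}
  | node (C : Finset (Word Q)) (i : Fin n)
      (hne : ∀ c ∈ C, c i ≠ [])
      (h : ∀ a : Fin (Q i), TreeDecodable Q (child C i a)) :
      TreeDecodable Q C

/-- Descriptive length of a word, in nats. -/
noncomputable def dlen {n : ℕ} (Q : Fin n → ℕ) (c : Word Q) : ℝ :=
  ∑ i : Fin n, (c i).length * Real.log (Q i)

/-- The `j`-th codeword of the `Q`-ary selvage core. -/
def selvageCore {n : ℕ} (Q : Fin n → ℕ) (hQ : ∀ i, 2 ≤ Q i) (j : Fin n) : Word Q :=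
  fun i =>
    if i = j then []
    else if (i : ℕ) = ((j : ℕ) + 1) % n then [⟨1, by have := hQ i; omega⟩]
    else [⟨0, by have := hQ i; omega⟩]

/-- The `Q`-ary selvage core as a finite set. -/
noncomputable def selvageCoreSet {n : ℕ} (Q : Fin n → ℕ) (hQ : ∀ i, 2 ≤ Q i) :
    Finset (Word Q) :=
  Finset.univ.image (selvageCore Q hQ)

/-- The `Q`-ary selvage code: the selvage core together with all the words each of whose
components has length exactly one and which are prefix-free with every core word. -/
noncomputable def selvageCode {n : ℕ} (Q : Fin n → ℕ) (hQ : ∀ i, 2 ≤ Q i) :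
    Finset (Word Q) :=
  selvageCoreSet Q hQ ∪
    ((Finset.univ : Finset ((i : Fin n) → Fin (Q i))).image
        (fun f => (fun i => [f i] : Word Q))).filter
      (fun s => ∀ j : Fin n, PrefixFree s (selvageCore Q hQ j))

/-- A part `J` is separated from `Q`. -/
def Separated {n : ℕ} (Q : Fin n → ℕ) (J : Finset (Fin n)) : Prop :=
  ∀ x : Fin n → ℕ, (∏ i, Q i ^ x i) = (∏ i ∈ Jᶜ, Q i) → ∀ i ∈ J, x i = 0

/-- The `R`-ary selvage probability assembly, indexed canonically: the first `t`
probabilities are `r_j / N`, the remaining `N - Σ r_j` ones are `1 / N`. -/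
noncomputable def spa {t : ℕ} (R : Fin t → ℕ) :
    Fin (t + ((∏ j, R j) - (∑ j, R j))) → ℝ :=
  fun j => if h : (j : ℕ) < t then (R ⟨j, h⟩ : ℝ) / (∏ i, R i) else 1 / (∏ i, R i)

/-- A uniquely decodable finite family of `Q`-ary words. -/
def UniquelyDecodable {n m : ℕ} {Q : Fin n → ℕ} (c : Fin m → Word Q) : Prop :=
  Function.Injective
    (fun L : List (Fin m) => (fun i : Fin n => (L.map fun j => c j i).flatten : Word Q))

/-- The block of the word `w` in the container of side lengths `q_i ^ L_i`. -/
def block {n : ℕ} (Q : Fin n → ℕ) (L : Fin n → ℕ) (w : Word Q) : Set (Word Q) :=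
  {x | ∀ i, (x i).length = L i ∧ w i <+: x i}
open Finset Filter Real

lemma kraft_aux {n m : ℕ} (Q : Fin n → ℕ) (hQ : ∀ i, 2 ≤ Q i)
    (c : Fin m → Word Q) (hud : UniquelyDecodable c) :
    (∑ j, ∏ i, ((Q i : ℝ) ^ (c j i).length)⁻¹) ≤ 1 := by
  classical
  set S := ∑ j : Fin m, ∏ i, ((Q i : ℝ) ^ (c j i).length)⁻¹ with hSdef
  have hQ0 : ∀ i, (0:ℝ) < (Q i : ℝ) := fun i => by
    have := hQ i; exact_mod_cast Nat.lt_of_lt_of_le Nat.zero_lt_two this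
  set M : ℕ := Finset.univ.sup (fun jp : Fin m × Fin n => (c jp.1 jp.2).length) with hM
  have hMle : ∀ j i, (c j i).length ≤ M := fun j i => Finset.le_sup (f := fun jp : Fin m × Fin n => (c jp.1 jp.2).length) (Finset.mem_univ (j, i))
  set g : Word Q → ℝ := fun x => ∏ i, ((Q i : ℝ) ^ (x i).length)⁻¹ with hgdef
  have hgnn : ∀ x, 0 ≤ g x := fun x =>
    Finset.prod_nonneg fun i _ => inv_nonneg.mpr (pow_nonneg (hQ0 i).le _)
  have hmain : ∀ k : ℕ, S ^ k ≤ ((k * M + 1 : ℕ) : ℝ) ^ n := by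
    intro k
    set X : (Fin k → Fin m) → Word Q :=
      fun f => fun i => ((List.ofFn f).map (fun j => c j i)).flatten with hX
    have hXlen : ∀ (f : Fin k → Fin m) (i : Fin n),
        (X f i).length = ∑ t, (c (f t) i).length := by
      intro f i
      simp [hX, List.length_flatten, List.map_ofFn, Function.comp_def,
        ← Fin.sum_ofFn]
    have hXinj : Function.Injective X := by
      intro f g h
      exact List.ofFn_injective (hud h)
    have h1 : S ^ k = ∑ f : Fin k → Fin m, g (X f) := by
      have e1 : S ^ k = ∏ _t : Fin k, S := by
        rw [Finset.prod_const, Finset.card_univ, Fintype.card_fin]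
      rw [e1, hSdef, Finset.prod_univ_sum, Fintype.piFinset_univ]
      refine Finset.sum_congr rfl fun f _ => ?_
      show _ = ∏ i, ((Q i : ℝ) ^ (X f i).length)⁻¹
      rw [Finset.prod_comm]
      refine Finset.prod_congr rfl fun i _ => ?_
      rw [Finset.prod_inv_distrib, Finset.prod_pow_eq_pow_sum, hXlen f i]
    set s : Finset (Word Q) := Finset.univ.image X with hs
    have h2 : ∑ f : Fin k → Fin m, g (X f) = ∑ x ∈ s, g x :=
      (Finset.sum_image (fun a _ b _ h => hXinj h)).symm
    have hslen : ∀ x ∈ s, ∀ i, (x i).length ≤ k * M := by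
      intro x hx i
      obtain ⟨f, _, rfl⟩ := Finset.mem_image.mp hx
      rw [hXlen]
      calc ∑ t, (c (f t) i).length ≤ ∑ _t : Fin k, M :=
            Finset.sum_le_sum fun t _ => hMle _ _
        _ = k * M := by simp [Finset.sum_const, mul_comm]
    set len : Word Q → (Fin n → ℕ) := fun x i => (x i).length with hlendef
    set T : Finset (Fin n → ℕ) := s.image len with hT
    have h3 : ∑ x ∈ s, g x = ∑ t ∈ T, ∑ x ∈ s.filter (fun x => len x = t), g x :=
      (Finset.sum_fiberwise_of_maps_to (fun x hx => Finset.mem_image_of_mem len hx) g).symm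
    have h4 : ∀ t ∈ T, ∑ x ∈ s.filter (fun x => len x = t), g x ≤ 1 := by
      intro t _
      have hcard : ((s.filter (fun x => len x = t)).card : ℝ) ≤ ∏ i, (Q i : ℝ) ^ (t i) := by
        have hinj : ((s.filter (fun x => len x = t)) : Set (Word Q)).InjOn
            (fun x => (fun (i : Fin n) (r : Fin (t i)) =>
              (x i).getD r ⟨0, by have := hQ i; omega⟩)) := by
          intro x hx y hy hxy
          simp only [Finset.coe_filter, Set.mem_setOf_eq] at hx hy
          funext i
          have hxl : (x i).length = t i := congrFun hx.2 i
          have hyl : (y i).length = t i := congrFun hy.2 i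
          refine List.ext_getElem (by omega) fun r h1r h2r => ?_
          have h5 := congrFun (congrFun hxy i) ⟨r, by omega⟩
          simp only [Fin.val_mk] at h5
          rw [List.getD_eq_getElem _ _ h1r, List.getD_eq_getElem _ _ h2r] at h5
          exact h5
        have hle := Finset.card_le_card_of_injOn
          (t := (Finset.univ : Finset (∀ i : Fin n, Fin (t i) → Fin (Q i))))
          _ (fun x _ => Finset.mem_univ _) hinj
        have hcardt : (Finset.univ : Finset (∀ i : Fin n, Fin (t i) → Fin (Q i))).card
            = ∏ i, (Q i) ^ (t i) := by
          simp [Finset.card_univ, Fintype.card_pi, Fintype.card_fun]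
        rw [hcardt] at hle
        calc ((s.filter (fun x => len x = t)).card : ℝ) ≤ ((∏ i, (Q i) ^ (t i) : ℕ) : ℝ) := by
              exact_mod_cast hle
          _ = ∏ i, (Q i : ℝ) ^ (t i) := by push_cast; rfl
      have hsumconst : ∑ x ∈ s.filter (fun x => len x = t), g x
          = ((s.filter (fun x => len x = t)).card : ℝ) * ∏ i, ((Q i : ℝ) ^ (t i))⁻¹ := by
        have hgx : ∀ x ∈ s.filter (fun x => len x = t), g x = ∏ i, ((Q i : ℝ) ^ (t i))⁻¹ := by
          intro x hx
          have hxl : len x = t := (Finset.mem_filter.mp hx).2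
          show ∏ i, ((Q i : ℝ) ^ (x i).length)⁻¹ = _
          refine Finset.prod_congr rfl fun i _ => ?_
          have hli : (x i).length = t i := congrFun hxl i
          rw [hli]
        rw [Finset.sum_congr rfl hgx, Finset.sum_const, nsmul_eq_mul]
      rw [hsumconst]
      have hprodpos : (0:ℝ) < ∏ i, (Q i : ℝ) ^ (t i) :=
        Finset.prod_pos fun i _ => pow_pos (hQ0 i) _
      calc ((s.filter (fun x => len x = t)).card : ℝ) * ∏ i, ((Q i : ℝ) ^ (t i))⁻¹
          ≤ (∏ i, (Q i : ℝ) ^ (t i)) * ∏ i, ((Q i : ℝ) ^ (t i))⁻¹ := by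
            apply mul_le_mul_of_nonneg_right hcard
            exact Finset.prod_nonneg fun i _ => inv_nonneg.mpr (pow_nonneg (hQ0 i).le _)
        _ = 1 := by
            rw [← Finset.prod_mul_distrib]
            exact Finset.prod_eq_one fun i _ =>
              mul_inv_cancel₀ (pow_pos (hQ0 i) _).ne'
    have h6 : (T.card : ℝ) ≤ ((k * M + 1 : ℕ) : ℝ) ^ n := by
      have hinj : (T : Set (Fin n → ℕ)).InjOn
          (fun t => (fun i => (⟨min (t i) (k * M), by omega⟩ : Fin (k * M + 1)))) := by
        intro t ht t2 ht2 h
        rw [Finset.mem_coe, hT, Finset.mem_image] at ht ht2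
        obtain ⟨x, hx, rfl⟩ := ht
        obtain ⟨y, hy, rfl⟩ := ht2
        funext i
        have h1 := hslen x (by exact_mod_cast hx) i
        have h2 := hslen y (by exact_mod_cast hy) i
        have := congrFun h i
        simp only [Fin.mk.injEq] at this
        simpa [hlendef, min_eq_left h1, min_eq_left h2] using this
      have hle := Finset.card_le_card_of_injOn
        (t := (Finset.univ : Finset (Fin n → Fin (k * M + 1))))
        _ (fun t _ => Finset.mem_univ _) hinj
      have : (Finset.univ : Finset (Fin n → Fin (k * M + 1))).card = (k * M + 1) ^ n := by
        simp [Finset.card_univ, Fintype.card_fun]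
      rw [this] at hle
      calc (T.card : ℝ) ≤ (((k * M + 1) ^ n : ℕ) : ℝ) := by exact_mod_cast hle
        _ = ((k * M + 1 : ℕ) : ℝ) ^ n := by push_cast; ring
    calc S ^ k = ∑ x ∈ s, g x := by rw [h1, h2]
      _ = ∑ t ∈ T, ∑ x ∈ s.filter (fun x => len x = t), g x := h3
      _ ≤ ∑ _t ∈ T, (1:ℝ) := Finset.sum_le_sum h4
      _ = (T.card : ℝ) := by simp
      _ ≤ ((k * M + 1 : ℕ) : ℝ) ^ n := h6
  -- conclude S ≤ 1
  by_contra hS1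
  push_neg at hS1
  have hSpos : (0:ℝ) < S := lt_trans one_pos hS1
  set b := Real.log S with hb
  have hbpos : 0 < b := Real.log_pos hS1
  have hkey : ∀ k : ℕ, 1 ≤ k →
      (1:ℝ) ≤ ((M:ℝ) + 1) ^ n * (k:ℝ) ^ n * Real.exp (-(b * k)) := by
    intro k hk
    have h7 : S ^ k = Real.exp (b * k) := by
      rw [mul_comm, Real.exp_nat_mul, Real.exp_log hSpos]
    have h8 : ((k * M + 1 : ℕ) : ℝ) ≤ ((M:ℝ) + 1) * k := by
      have : (k * M + 1 : ℕ) ≤ (M + 1) * k := by nlinarith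
      exact_mod_cast this
    have h9 : Real.exp (b * k) ≤ ((M:ℝ) + 1) ^ n * (k:ℝ) ^ n := by
      calc Real.exp (b * k) = S ^ k := h7.symm
        _ ≤ ((k * M + 1 : ℕ) : ℝ) ^ n := hmain k
        _ ≤ (((M:ℝ) + 1) * k) ^ n := by
            apply pow_le_pow_left₀ (by positivity) h8
        _ = ((M:ℝ) + 1) ^ n * (k:ℝ) ^ n := mul_pow _ _ _
    rw [Real.exp_neg, ← div_eq_mul_inv, le_div_iff₀ (Real.exp_pos _), one_mul]
    exact h9
  have htend : Tendsto (fun k : ℕ => ((M:ℝ) + 1) ^ n * (k:ℝ) ^ n * Real.exp (-(b * k)))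
      atTop (nhds 0) := by
    have t2 : Tendsto (fun k : ℕ => b * k) atTop atTop :=
      Tendsto.const_mul_atTop hbpos tendsto_natCast_atTop_atTop
    have t3 := (tendsto_pow_mul_exp_neg_atTop_nhds_zero n).comp t2
    have t4 := t3.const_mul (((M:ℝ) + 1) ^ n / b ^ n)
    rw [mul_zero] at t4
    refine t4.congr fun k => ?_
    simp only [Function.comp]
    rw [mul_pow]
    field_simp
  have hev := (htend.eventually (gt_mem_nhds one_pos)).and (eventually_ge_atTop 1)
  obtain ⟨k, hlt, hge⟩ := hev.exists
  exact absurd (hkey k hge) (not_le.mpr hlt)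


/-- Multichannel entropy bound: for any uniquely decodable finite family
of `Q`-ary words and positive probabilities summing to one, the expected descriptive
length is at least the entropy, with equality iff `|c_j| = −ln p_j` for all `j`. -/
theorem stmt14 {n m : ℕ} (hn : 1 ≤ n) (Q : Fin n → ℕ) (hQ : ∀ i, 2 ≤ Q i)
    (c : Fin m → Word Q) (hud : UniquelyDecodable c)
    (p : Fin m → ℝ) (hp : ∀ j, 0 < p j) (hsum : (∑ j, p j) = 1) :
    (-∑ j, p j * Real.log (p j)) ≤ (∑ j, p j * dlen Q (c j)) ∧
    ((∑ j, p j * dlen Q (c j)) = -∑ j, p j * Real.log (p j) ↔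
      ∀ j, dlen Q (c j) = -Real.log (p j)) := by
  classical
  have hkraft := kraft_aux Q hQ c hud
  have hQ0 : ∀ i, (0:ℝ) < (Q i : ℝ) := fun i => by
    have := hQ i; exact_mod_cast Nat.lt_of_lt_of_le Nat.zero_lt_two this
  set x : Fin m → ℝ := fun j => ∏ i, ((Q i : ℝ) ^ (c j i).length)⁻¹ with hxdef
  have hxpos : ∀ j, 0 < x j := fun j =>
    Finset.prod_pos fun i _ => inv_pos.mpr (pow_pos (hQ0 i) _)
  have hxexp : ∀ j, x j = Real.exp (-(dlen Q (c j))) := by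
    intro j
    rw [dlen, ← Finset.sum_neg_distrib, Real.exp_sum]
    refine Finset.prod_congr rfl fun i _ => ?_
    rw [Real.exp_neg, Real.exp_nat_mul, Real.exp_log (hQ0 i)]
  have hlogx : ∀ j, Real.log (x j) = -(dlen Q (c j)) := by
    intro j; rw [hxexp j, Real.log_exp]
  -- key per-term inequality
  have hterm : ∀ j, p j * Real.log (x j / p j) ≤ x j - p j := by
    intro j
    have hr : 0 < x j / p j := div_pos (hxpos j) (hp j)
    have hlog := Real.log_le_sub_one_of_pos hr
    have hpx : p j * (x j / p j) = x j := by
      rw [mul_comm, div_mul_eq_mul_div, mul_div_assoc, div_self (hp j).ne', mul_one]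
    nlinarith [hp j]
  -- rewrite the sum of p * log (x/p)
  have hAB : ∑ j, p j * Real.log (x j / p j)
      = -(∑ j, p j * dlen Q (c j)) - ∑ j, p j * Real.log (p j) := by
    rw [← Finset.sum_neg_distrib, ← Finset.sum_sub_distrib]
    refine Finset.sum_congr rfl fun j _ => ?_
    rw [Real.log_div (hxpos j).ne' (hp j).ne', hlogx j]
    ring
  have hsumle : ∑ j, p j * Real.log (x j / p j) ≤ 0 := by
    calc ∑ j, p j * Real.log (x j / p j) ≤ ∑ j, (x j - p j) := Finset.sum_le_sum fun j _ => hterm j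
      _ = (∑ j, x j) - 1 := by rw [Finset.sum_sub_distrib, hsum]
      _ ≤ 0 := by linarith [hkraft]
  constructor
  · rw [hAB] at hsumle; linarith
  constructor
  · -- equality → pointwise
    intro heq
    have hzero : ∑ j, p j * Real.log (x j / p j) = 0 := by rw [hAB, heq]; ring
    have hunn : ∀ j ∈ Finset.univ, (0:ℝ) ≤ (x j - p j) - p j * Real.log (x j / p j) :=
      fun j _ => by linarith [hterm j]
    have husum : ∑ j, ((x j - p j) - p j * Real.log (x j / p j)) = 0 := by
      have h1 : ∑ j, ((x j - p j) - p j * Real.log (x j / p j))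
          = ((∑ j, x j) - 1) - ∑ j, p j * Real.log (x j / p j) := by
        rw [Finset.sum_sub_distrib, Finset.sum_sub_distrib, hsum]
      have h2 : (0:ℝ) ≤ ∑ j, ((x j - p j) - p j * Real.log (x j / p j)) :=
        Finset.sum_nonneg hunn
      rw [h1, hzero] at h2 ⊢
      linarith [hkraft]
    have hall := (Finset.sum_eq_zero_iff_of_nonneg hunn).mp husum
    intro j
    have hj : (x j - p j) - p j * Real.log (x j / p j) = 0 := hall j (Finset.mem_univ j)
    have hr : 0 < x j / p j := div_pos (hxpos j) (hp j)
    have hreq : x j / p j = 1 := by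
      by_contra hne
      have := Real.log_lt_sub_one_of_pos hr hne
      have hpx : p j * (x j / p j) = x j := by
        rw [mul_comm, div_mul_eq_mul_div, mul_div_assoc, div_self (hp j).ne', mul_one]
      nlinarith [hp j]
    have hxp : x j = p j := by
      have := (div_eq_one_iff_eq (hp j).ne').mp hreq
      exact this
    have := hlogx j
    rw [hxp] at this
    linarith
  · -- pointwise → equality
    intro h
    rw [← Finset.sum_neg_distrib]
    refine Finset.sum_congr rfl fun j _ => ?_
    rw [h j]; ring
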